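/- arXiv:2206.04120 — 10 statements merged into one kernel-verified Lean document; each statement's English description precedes it below -/
import Mathlib

section
/- In the algebra U_E(λ) over a field F of characteristic ≠ 2, with basis a set E of idempotents and multiplication e_i e_j = δ e_i + λ e_j (δ = 1 − λ, λ ∉ {0,1}), for any fixed a ∈ E the subspace Z = span{e − a : e ∈ E} is a two-sided ideal with Z² = 0, and U_E(λ) = Fa ⊕ Z. -/
/-!
Each `e i` acts on a difference `e j - e k` by the scalar `λ` from the left and by `1 - λ` from the
right, so `Z` is stable under multiplication by the spanning set `E`, and a product of two
differences is `(1 - λ)(e i - e k) - (1 - λ)(e i - e k) = 0`. The linear form sending every `e i`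
to `1` vanishes on `Z` but not on `a`, which separates `F a` from `Z`, while
`e i = a + (e i - a)` shows that together they span.
-/

open Submodule

theorem Submodule.mul_mem_of_mem_span {R A : Type*} [CommSemiring R]
    [NonUnitalNonAssocSemiring A] [Module R A] [SMulCommClass R A A] [IsScalarTower R A A]
    {s t : Set A} {P : Submodule R A} (h : ∀ x ∈ s, ∀ y ∈ t, x * y ∈ P)
    {x y : A} (hx : x ∈ span R s) (hy : y ∈ span R t) : x * y ∈ P := by
  have hmap : map₂ (LinearMap.mul R A) (span R s) (span R t) ≤ P := by
    rw [map₂_span_span, span_le]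
    rintro _ ⟨x, hx, y, hy, rfl⟩
    exact h x hx y hy
  exact map₂_le.mp hmap x hx y hy

theorem Module.Basis.isCompl_span_singleton_span_sub {R M I : Type*} [CommRing R]
    [AddCommGroup M] [Module R M] (b : Basis I R M) (i₀ : I) :
    IsCompl (R ∙ b i₀) (span R {x | ∃ i, x = b i - b i₀}) := by
  set f : M →ₗ[R] R := b.constr R fun _ => 1
  have hf : ∀ i, f (b i) = 1 := b.constr_basis R _
  have hker : span R {x | ∃ i, x = b i - b i₀} ≤ LinearMap.ker f := by
    rw [span_le]
    rintro _ ⟨i, rfl⟩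
    simp [hf]
  constructor
  · rw [disjoint_iff_inf_le]
    rintro _ ⟨hx, hxZ⟩
    obtain ⟨c, rfl⟩ := mem_span_singleton.mp hx
    have hc : c = 0 := by simpa [hf] using hker hxZ
    simp [hc]
  · rw [codisjoint_iff_le_sup, ← b.span_eq, span_le]
    rintro _ ⟨i, rfl⟩
    rw [← add_sub_cancel (b i₀) (b i)]
    exact add_mem (mem_sup_left (mem_span_singleton_self _))
      (mem_sup_right (subset_span ⟨i, rfl⟩))

namespace UE

variable {F A I : Type*} [CommRing F] [NonUnitalNonAssocRing A] [Module F A] {lam : F}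
  {e : I → A}

theorem basis_mul_sub (hmul : ∀ i j, e i * e j = (1 - lam) • e i + lam • e j) (j i k : I) :
    e j * (e i - e k) = lam • (e i - e k) := by
  rw [mul_sub, hmul, hmul]
  module

theorem sub_mul_basis (hmul : ∀ i j, e i * e j = (1 - lam) • e i + lam • e j) (i k j : I) :
    (e i - e k) * e j = (1 - lam) • (e i - e k) := by
  rw [sub_mul, hmul, hmul]
  module

theorem sub_mul_sub (hmul : ∀ i j, e i * e j = (1 - lam) • e i + lam • e j) (i k j l : I) :
    (e i - e k) * (e j - e l) = 0 := by
  rw [mul_sub, sub_mul_basis hmul, sub_mul_basis hmul, sub_self]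

end UE

theorem stmt1_general {F A I : Type*} [Field F] [NonUnitalNonAssocRing A] [Module F A]
    [SMulCommClass F A A] [IsScalarTower F A A]
    (lam : F)
    (e : I → A) (hindep : LinearIndependent F e)
    (hspan : Submodule.span F (Set.range e) = ⊤)
    (hmul : ∀ i j, e i * e j = (1 - lam) • e i + lam • e j)
    (i0 : I) :
    ∀ Z : Submodule F A, Z = Submodule.span F {x : A | ∃ i, x = e i - e i0} →
      (∀ z ∈ Z, ∀ u : A, u * z ∈ Z ∧ z * u ∈ Z) ∧
      (∀ z ∈ Z, ∀ w ∈ Z, z * w = 0) ∧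
      IsCompl (Submodule.span F {e i0}) Z := by
  rintro Z rfl
  have hu : ∀ u : A, u ∈ span F (Set.range e) := by simp [hspan]
  refine ⟨fun z hz u => ⟨?_, ?_⟩, fun z hz w hw => ?_, ?_⟩
  · refine mul_mem_of_mem_span ?_ (hu u) hz
    rintro _ ⟨j, rfl⟩ _ ⟨i, rfl⟩
    rw [UE.basis_mul_sub hmul]
    exact smul_mem _ _ (subset_span ⟨i, rfl⟩)
  · refine mul_mem_of_mem_span ?_ hz (hu u)
    rintro _ ⟨i, rfl⟩ _ ⟨j, rfl⟩
    rw [UE.sub_mul_basis hmul]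
    exact smul_mem _ _ (subset_span ⟨i, rfl⟩)
  · refine mem_bot F |>.mp (mul_mem_of_mem_span ?_ hz hw)
    rintro _ ⟨i, rfl⟩ _ ⟨j, rfl⟩
    rw [UE.sub_mul_sub hmul, mem_bot]
  · simpa using (Module.Basis.mk hindep hspan.ge).isCompl_span_singleton_span_sub i0

/-- In `U_E(λ)` (char F ≠ 2, λ ∉ {0,1}, δ = 1-λ), for a fixed basis idempotent `a = e i₀`,
the subspace `Z = span{e i - a}` is a two-sided ideal with `Z² = 0`, and
`U_E(λ) = F a ⊕ Z`. -/
theorem stmt1 {F A I : Type*} [Field F] [NonUnitalNonAssocRing A] [Module F A]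
    [SMulCommClass F A A] [IsScalarTower F A A]
    (hchar : (2 : F) ≠ 0) (lam : F) (hl0 : lam ≠ 0) (hl1 : lam ≠ 1)
    (e : I → A) (hindep : LinearIndependent F e)
    (hspan : Submodule.span F (Set.range e) = ⊤)
    (hmul : ∀ i j, e i * e j = (1 - lam) • e i + lam • e j)
    (i0 : I) :
    ∀ Z : Submodule F A, Z = Submodule.span F {x : A | ∃ i, x = e i - e i0} →
      (∀ z ∈ Z, ∀ u : A, u * z ∈ Z ∧ z * u ∈ Z) ∧
      (∀ z ∈ Z, ∀ w ∈ Z, z * w = 0) ∧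
      IsCompl (Submodule.span F {e i0}) Z :=
  stmt1_general lam e hindep hspan hmul i0
end

section
/- In U_E(λ) (char F ≠ 2, λ ∉ {0,1}, δ = 1 − λ), the nonzero idempotents are exactly the elements a + z with a ∈ E fixed and z ∈ span{e − a : e ∈ E}; equivalently, an element νa + z (z in the span of {e − a : e ∈ E}) is a nonzero idempotent if and only if ν = 1. -/
/-!
With `s` the sum of the coordinates in the basis `E`, bilinearity turns the multiplication rule
on basis vectors into `u * v = (δ s(v)) u + (λ s(u)) v` for all `u, v`; in particular
`u * u = s(u) u`. Hence `u` is a nonzero idempotent iff `s(u) = 1`. Since `s(a) = 1` and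
`Z = ker s`, this is the condition `u ∈ a + Z`, and for `u = ν a + z` it reads `ν = 1`.
-/

open Submodule

namespace Module.Basis

variable {I : Type*}

section

variable {F M : Type*} [Ring F] [AddCommGroup M] [Module F M]

theorem ker_sumCoords (b : Basis I F M) (i₀ : I) :
    LinearMap.ker b.sumCoords = span F (Set.range fun i => b i - b i₀) := by
  refine le_antisymm (fun u hu => ?_) (span_le.mpr ?_)
  · let f : M →ₗ[F] M := LinearMap.id - b.sumCoords.smulRight (b i₀)
    have hf : ∀ i, f (b i) = b i - b i₀ := fun i => by simp [f]
    have hfu : f u ∈ span F (Set.range fun i => b i - b i₀) := by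
      rw [← funext hf, Set.range_comp', ← map_span, b.span_eq]
      exact mem_map_of_mem mem_top
    simpa [f, LinearMap.mem_ker.mp hu] using hfu
  · rintro _ ⟨i, rfl⟩
    rw [SetLike.mem_coe, LinearMap.mem_ker, map_sub, sumCoords_self_apply, sumCoords_self_apply,
      sub_self]

end

variable {F A : Type*} [CommRing F] [NonUnitalNonAssocRing A] [Module F A]

theorem mul_eq_sumCoords_smul_add [SMulCommClass F A A] [IsScalarTower F A A]
    (b : Basis I F A) (lam : F) (hmul : ∀ i j, b i * b j = (1 - lam) • b i + lam • b j)
    (u v : A) : u * v = ((1 - lam) * b.sumCoords v) • u + (lam * b.sumCoords u) • v := by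
  let rule : A →ₗ[F] A →ₗ[F] A := LinearMap.mk₂ F
    (fun u v => ((1 - lam) * b.sumCoords v) • u + (lam * b.sumCoords u) • v)
    (by intros; simp only [map_add]; module)
    (by intros; simp only [map_smul, smul_eq_mul]; module)
    (by intros; simp only [map_add]; module)
    (by intros; simp only [map_smul, smul_eq_mul]; module)
  have h : LinearMap.mul F A = rule :=
    b.ext fun i => b.ext fun j => by simp [rule, hmul]
  exact LinearMap.congr_fun₂ h u v

end Module.Basis

theorem mul_self_eq_self_and_ne_zero_iff {F A : Type*} [DivisionRing F] [AddCommGroup A] [Mul A]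
    [Module F A] (s : A →ₗ[F] F) (hsq : ∀ u : A, u * u = s u • u) (u : A) :
    (u * u = u ∧ u ≠ 0) ↔ s u = 1 := by
  rw [hsq]
  constructor
  · rintro ⟨hid, hne⟩
    have h : (s u - 1) • u = 0 := by rw [sub_smul, one_smul, hid, sub_self]
    exact sub_eq_zero.mp ((smul_eq_zero.mp h).resolve_right hne)
  · intro h
    refine ⟨by rw [h, one_smul], fun hu => ?_⟩
    simp [hu] at h

theorem stmt2_general {F A I : Type*} [Field F] [NonUnitalNonAssocRing A] [Module F A]
    [SMulCommClass F A A] [IsScalarTower F A A]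
    (lam : F)
    (e : I → A) (hindep : LinearIndependent F e)
    (hspan : Submodule.span F (Set.range e) = ⊤)
    (hmul : ∀ i j, e i * e j = (1 - lam) • e i + lam • e j)
    (i0 : I) :
    ∀ Z : Submodule F A, Z = Submodule.span F {x : A | ∃ i, x = e i - e i0} →
      ({u : A | u * u = u ∧ u ≠ 0} = {u : A | ∃ z ∈ Z, u = e i0 + z}) ∧
      (∀ (ν : F), ∀ z ∈ Z,
        ((ν • e i0 + z) * (ν • e i0 + z) = ν • e i0 + z ∧ ν • e i0 + z ≠ 0) ↔ ν = 1) := by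
  obtain ⟨b, rfl⟩ : ∃ b : Module.Basis I F A, ⇑b = e :=
    ⟨.mk hindep hspan.ge, Module.Basis.coe_mk _ _⟩
  rintro Z rfl
  have hZ : span F {x : A | ∃ i, x = b i - b i0} = LinearMap.ker b.sumCoords := by
    rw [b.ker_sumCoords i0]
    congr 1
    ext
    simp [eq_comm]
  have hidem := mul_self_eq_self_and_ne_zero_iff b.sumCoords fun u => by
    rw [b.mul_eq_sumCoords_smul_add lam hmul]
    module
  simp only [Set.ext_iff, Set.mem_ofPred_eq, hidem, hZ, LinearMap.mem_ker]
  refine ⟨fun u => ⟨fun hu => ⟨u - b i0, ?_, by abel⟩, ?_⟩, fun ν z hz => ?_⟩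
  · rw [map_sub, hu, b.sumCoords_self_apply, sub_self]
  · rintro ⟨z, hz, rfl⟩
    rw [map_add, b.sumCoords_self_apply, hz, add_zero]
  · rw [map_add, map_smul, b.sumCoords_self_apply, hz, add_zero, smul_eq_mul, mul_one]

/-- In `U_E(λ)`, the nonzero idempotents are exactly the elements `a + z` with
`z ∈ Z = span{e i - a}`; equivalently `ν • a + z` (with `z ∈ Z`) is a nonzero idempotent
iff `ν = 1`. -/
theorem stmt2 {F A I : Type*} [Field F] [NonUnitalNonAssocRing A] [Module F A]
    [SMulCommClass F A A] [IsScalarTower F A A]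
    (hchar : (2 : F) ≠ 0) (lam : F) (hl0 : lam ≠ 0) (hl1 : lam ≠ 1)
    (e : I → A) (hindep : LinearIndependent F e)
    (hspan : Submodule.span F (Set.range e) = ⊤)
    (hmul : ∀ i j, e i * e j = (1 - lam) • e i + lam • e j)
    (i0 : I) :
    ∀ Z : Submodule F A, Z = Submodule.span F {x : A | ∃ i, x = e i - e i0} →
      ({u : A | u * u = u ∧ u ≠ 0} = {u : A | ∃ z ∈ Z, u = e i0 + z}) ∧
      (∀ (ν : F), ∀ z ∈ Z,
        ((ν • e i0 + z) * (ν • e i0 + z) = ν • e i0 + z ∧ ν • e i0 + z ≠ 0) ↔ ν = 1) :=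
  stmt2_general lam e hindep hspan hmul i0
end

section
/- In U_E(λ) (char F ≠ 2, λ ∉ {0,1}, δ = 1 − λ), any two idempotents e, f satisfy ef = δe + λf. -/
/-!
Let `σ` be the linear functional taking the value `1` on every basis vector. The defining relation
`eᵢ eⱼ = δ eᵢ + λ eⱼ` extends bilinearly to `x y = δ σ(y) x + λ σ(x) y` for all `x, y`. For an
idempotent `x ≠ 0` this gives `x = σ(x) x`, so `σ(x) = 1`, and the formula for `f g` follows.
-/

section

variable {R A ι : Type*}

theorem mul_eq_smul_add_smul_of_basis [CommSemiring R] [NonUnitalNonAssocSemiring A] [Module R A]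
    [SMulCommClass R A A] [IsScalarTower R A A] (b : Module.Basis ι R A) (σ : A →ₗ[R] R)
    (hσ : ∀ i, σ (b i) = 1) (c d : R) (hmul : ∀ i j, b i * b j = c • b i + d • b j) (x y : A) :
    x * y = (c * σ y) • x + (d * σ x) • y := by
  let rhs : A →ₗ[R] A →ₗ[R] A := LinearMap.mk₂ R (fun x y => (c * σ y) • x + (d * σ x) • y)
    (fun x x' y => by simp only [map_add, smul_add, add_smul, mul_add]; abel)
    (fun r x y => by simp only [map_smul, smul_eq_mul, smul_add, smul_smul]; ring_nf)
    (fun x y y' => by simp only [map_add, smul_add, add_smul, mul_add]; abel)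
    (fun r x y => by simp only [map_smul, smul_eq_mul, smul_add, smul_smul]; ring_nf)
  have hext : LinearMap.mul R A = rhs :=
    LinearMap.ext_basis b b fun i j => by simp [rhs, hσ, hmul]
  exact LinearMap.congr_fun₂ hext x y

theorem map_eq_one_of_isIdempotentElem [Ring R] [IsCancelMulZero R] [NonUnitalNonAssocRing A]
    [Module R A] [Module.IsTorsionFree R A] {σ : A →ₗ[R] R} {c d : R} (hcd : c + d = 1)
    (hmul : ∀ x y : A, x * y = (c * σ y) • x + (d * σ x) • y)
    {x : A} (hx : IsIdempotentElem x) (hx0 : x ≠ 0) : σ x = 1 := by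
  have hfix : σ x • x = (1 : R) • x :=
    calc σ x • x = (c * σ x) • x + (d * σ x) • x := by rw [← add_smul, ← add_mul, hcd, one_mul]
      _ = x * x := (hmul x x).symm
      _ = (1 : R) • x := by rw [hx.eq, one_smul]
  exact smul_left_injective R hx0 hfix

end

theorem stmt3_general {F A I : Type*} [Field F] [NonUnitalNonAssocRing A] [Module F A]
    [SMulCommClass F A A] [IsScalarTower F A A]
    (lam : F)
    (e : I → A) (hindep : LinearIndependent F e)
    (hspan : Submodule.span F (Set.range e) = ⊤)
    (hmul : ∀ i j, e i * e j = (1 - lam) • e i + lam • e j)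
    (f g : A) (hf : f * f = f) (hg : g * g = g) (hf0 : f ≠ 0) (hg0 : g ≠ 0) :
    f * g = (1 - lam) • f + lam • g := by
  let b := Module.Basis.mk hindep hspan.ge
  have hb : ⇑b = e := Module.Basis.coe_mk _ _
  let σ := b.constr F fun _ => (1 : F)
  have hprod := mul_eq_smul_add_smul_of_basis b σ (b.constr_basis F _) (1 - lam) lam
    (by simpa only [hb] using hmul)
  have hσf : σ f = 1 := map_eq_one_of_isIdempotentElem (sub_add_cancel 1 lam) hprod hf hf0
  have hσg : σ g = 1 := map_eq_one_of_isIdempotentElem (sub_add_cancel 1 lam) hprod hg hg0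
  rw [hprod, hσf, hσg, mul_one, mul_one]

/-- In `U_E(λ)`, any two (nonzero) idempotents `f, g` satisfy `f g = δ f + λ g`. -/
theorem stmt3 {F A I : Type*} [Field F] [NonUnitalNonAssocRing A] [Module F A]
    [SMulCommClass F A A] [IsScalarTower F A A]
    (hchar : (2 : F) ≠ 0) (lam : F) (hl0 : lam ≠ 0) (hl1 : lam ≠ 1)
    (e : I → A) (hindep : LinearIndependent F e)
    (hspan : Submodule.span F (Set.range e) = ⊤)
    (hmul : ∀ i j, e i * e j = (1 - lam) • e i + lam • e j)
    (f g : A) (hf : f * f = f) (hg : g * g = g) (hf0 : f ≠ 0) (hg0 : g ≠ 0) :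
    f * g = (1 - lam) • f + lam • g :=
  stmt3_general lam e hindep hspan hmul f g hf hg hf0 hg0
end

section
/- In U_E(λ) (char F ≠ 2, λ ∉ {0,1}), if z ∈ U_E(λ) satisfies xz = 0 for all x ∈ U_E(λ), then z = 0. -/
/-!
Let `σ` be the linear functional summing the coordinates in the basis `e`. Expanding bilinearly,
`e i * z = ((1 - λ) σ z) • e i + λ • z`. If this vanishes, applying `σ` gives
`λ σ z = -(1 - λ) σ z`, i.e. `σ z = 0`, so `λ • z = 0` and `z = 0`.
-/

namespace Module.Basis

variable {R A I : Type*} [CommRing R] [NonUnitalNonAssocSemiring A] [Module R A]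
  [SMulCommClass R A A] (b : Basis I R A) {lam : R}

theorem self_mul_eq (hmul : ∀ i j, b i * b j = (1 - lam) • b i + lam • b j)
    (i : I) (y : A) : b i * y = ((1 - lam) * b.sumCoords y) • b i + lam • y := by
  have hmulLeft : LinearMap.mulLeft R (b i)
      = (1 - lam) • b.sumCoords.smulRight (b i) + lam • LinearMap.id :=
    b.ext fun j => by simp [hmul, sumCoords_self_apply]
  simpa [mul_smul] using LinearMap.congr_fun hmulLeft y

theorem sumCoords_eq_zero_of_self_mul_eq_zero
    (hmul : ∀ i j, b i * b j = (1 - lam) • b i + lam • b j) {i : I} {z : A}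
    (hz : b i * z = 0) : b.sumCoords z = 0 := by
  have h := congrArg b.sumCoords (b.self_mul_eq hmul i z)
  simp only [hz, map_zero, map_add, map_smul, sumCoords_self_apply, smul_eq_mul] at h
  linear_combination -h

theorem eq_zero_of_self_mul_eq_zero {F : Type*} [Field F] [Module F A] [SMulCommClass F A A]
    (b : Basis I F A) {lam : F} (hl0 : lam ≠ 0)
    (hmul : ∀ i j, b i * b j = (1 - lam) • b i + lam • b j) {i : I} {z : A}
    (hz : b i * z = 0) : z = 0 := by
  have hσ := b.sumCoords_eq_zero_of_self_mul_eq_zero hmul hz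
  rw [b.self_mul_eq hmul i z, hσ, mul_zero, zero_smul, zero_add] at hz
  exact (smul_eq_zero.mp hz).resolve_left hl0

end Module.Basis

theorem stmt4_general {F A I : Type*} [Field F] [NonUnitalNonAssocRing A] [Module F A]
    [SMulCommClass F A A]
    (lam : F) (hl0 : lam ≠ 0)
    (e : I → A) (hindep : LinearIndependent F e)
    (hspan : Submodule.span F (Set.range e) = ⊤)
    (hmul : ∀ i j, e i * e j = (1 - lam) • e i + lam • e j)
    (z : A) (hz : ∀ x : A, x * z = 0) :
    z = 0 := by
  let b := Module.Basis.mk hindep hspan.ge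
  have hb : ⇑b = e := Module.Basis.coe_mk hindep hspan.ge
  rcases isEmpty_or_nonempty I with hI | ⟨⟨i⟩⟩
  · exact b.ext_elem fun i => isEmptyElim i
  · exact b.eq_zero_of_self_mul_eq_zero hl0 (hb ▸ hmul) (hz (b i))

/-- In `U_E(λ)`, if `x z = 0` for all `x`, then `z = 0`. -/
theorem stmt4 {F A I : Type*} [Field F] [NonUnitalNonAssocRing A] [Module F A]
    [SMulCommClass F A A] [IsScalarTower F A A]
    (hchar : (2 : F) ≠ 0) (lam : F) (hl0 : lam ≠ 0) (hl1 : lam ≠ 1)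
    (e : I → A) (hindep : LinearIndependent F e)
    (hspan : Submodule.span F (Set.range e) = ⊤)
    (hmul : ∀ i j, e i * e j = (1 - lam) • e i + lam • e j)
    (z : A) (hz : ∀ x : A, x * z = 0) :
    z = 0 :=
  stmt4_general lam hl0 e hindep hspan hmul z hz
end

section
/- In the exceptional algebra A_exc,3({a,b},λ), the set of idempotents is exactly {0, a+b−y} ∪ {a + μy : μ ∈ F} ∪ {b + μy : μ ∈ F}. -/
/-- In `A_exc,3({a,b},λ)`, the idempotents are exactly
`{0, a+b−y} ∪ {a + μy : μ ∈ F} ∪ {b + μy : μ ∈ F}`. -/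
theorem stmt9 {F A : Type*} [Field F] [NonUnitalNonAssocRing A] [Module F A]
    [SMulCommClass F A A] [IsScalarTower F A A]
    (hchar : (2 : F) ≠ 0) (lam : F) (hl0 : lam ≠ 0) (hl1 : lam ≠ 1)
    (hld : lam ≠ 1 - lam)
    (a b y : A) (hindep : LinearIndependent F ![a, b, y])
    (hspan : Submodule.span F {a, b, y} = ⊤)
    (ha : a * a = a) (hb : b * b = b) (hy : y * y = 0)
    (hab : a * b = lam • y) (hay : a * y = lam • y) (hyb : y * b = lam • y)
    (hba : b * a = (1 - lam) • y) (hya : y * a = (1 - lam) • y)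
    (hby : b * y = (1 - lam) • y) :
    ∀ u : A, u * u = u ↔
      (u = 0 ∨ u = a + b - y ∨ (∃ μ : F, u = a + μ • y) ∨ (∃ μ : F, u = b + μ • y)) := by
  have expand : ∀ α β γ : F,
      (α • a + (β • b + γ • y)) * (α • a + (β • b + γ • y)) =
        (α * α) • a + ((β * β) • b + (α * β + α * γ + β * γ) • y) := by
    intro α β γ
    simp only [mul_add, add_mul, smul_mul_assoc, mul_smul_comm, ha, hb, hy, hab, hay,
      hyb, hba, hya, hby, smul_smul, smul_zero]
    match_scalars <;> ring
  intro u
  constructor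
  · intro hu
    have hmem : u ∈ Submodule.span F ({a, b, y} : Set A) := by
      rw [hspan]; exact Submodule.mem_top
    rw [Submodule.mem_span_insert] at hmem
    obtain ⟨α, z, hz, rfl⟩ := hmem
    rw [Submodule.mem_span_insert] at hz
    obtain ⟨β, w, hw, rfl⟩ := hz
    rw [Submodule.mem_span_singleton] at hw
    obtain ⟨γ, rfl⟩ := hw
    have hsum : (α * α - α) • a + (β * β - β) • b +
        (α * β + α * γ + β * γ - γ) • y = 0 := by
      have h := hu
      rw [expand] at h
      rw [← sub_eq_zero] at h
      rw [← h]
      match_scalars <;> ring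
    have key : ∀ i, ![α * α - α, β * β - β, α * β + α * γ + β * γ - γ] i = 0 := by
      apply Fintype.linearIndependent_iff.mp hindep
      rw [Fin.sum_univ_three]
      simpa using hsum
    have h0 : α * α - α = 0 := key 0
    have h1 : β * β - β = 0 := key 1
    have h2 : α * β + α * γ + β * γ - γ = 0 := key 2
    have hα : α = 0 ∨ α = 1 := by
      rcases mul_eq_zero.mp (show α * (α - 1) = 0 by linear_combination h0) with h | h
      · exact Or.inl h
      · exact Or.inr (by linear_combination h)
    have hβ : β = 0 ∨ β = 1 := by
      rcases mul_eq_zero.mp (show β * (β - 1) = 0 by linear_combination h1) with h | h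
      · exact Or.inl h
      · exact Or.inr (by linear_combination h)
    rcases hα with rfl | rfl <;> rcases hβ with rfl | rfl
    · have : γ = 0 := by linear_combination -h2
      subst this
      left; simp
    · right; right; right; exact ⟨γ, by simp⟩
    · right; right; left; exact ⟨γ, by simp⟩
    · have : γ = -1 := by linear_combination h2
      subst this
      right; left
      simp only [one_smul]
      module
  · rintro (rfl | rfl | ⟨μ, rfl⟩ | ⟨μ, rfl⟩)
    · simp
    · have h := expand 1 1 (-1)
      simp only [one_smul, mul_one, one_mul, neg_smul] at h ⊢
      rw [show a + b - y = a + (b + -y) by abel, h]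
      module
    · have h := expand 1 0 μ
      simp only [one_smul, zero_smul, mul_one, one_mul, mul_zero, zero_mul, zero_add,
        add_zero] at h
      rw [show a + μ • y = a + (0 + μ • y) by abel] at h ⊢
      rw [h]
    · have h := expand 0 1 μ
      simp only [one_smul, zero_smul, mul_one, one_mul, mul_zero, zero_mul, zero_add,
        add_zero] at h
      rw [show b + μ • y = 0 + (b + μ • y) by abel] at h ⊢
      rw [h]
end

section
/- The exceptional algebra A_exc,3({a,b},λ) is flexible: (uv)u = u(vu) for all u, v in the algebra. -/
/-- The exceptional algebra `A_exc,3({a,b},λ)` is flexible: `(uv)u = u(vu)`. -/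
theorem stmt10 {F A : Type*} [Field F] [NonUnitalNonAssocRing A] [Module F A]
    [SMulCommClass F A A] [IsScalarTower F A A]
    (hchar : (2 : F) ≠ 0) (lam : F) (hl0 : lam ≠ 0) (hl1 : lam ≠ 1)
    (hld : lam ≠ 1 - lam)
    (a b y : A) (hindep : LinearIndependent F ![a, b, y])
    (hspan : Submodule.span F {a, b, y} = ⊤)
    (ha : a * a = a) (hb : b * b = b) (hy : y * y = 0)
    (hab : a * b = lam • y) (hay : a * y = lam • y) (hyb : y * b = lam • y)
    (hba : b * a = (1 - lam) • y) (hya : y * a = (1 - lam) • y)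
    (hby : b * y = (1 - lam) • y) :
    ∀ u v : A, (u * v) * u = u * (v * u) := by
  -- symmetrized identity
  have key : ∀ u v w : A, (u * v) * w + (w * v) * u = u * (v * w) + w * (v * u) := by
    have hmem : ∀ z : A, z ∈ Submodule.span F ({a, b, y} : Set A) := by
      intro z; rw [hspan]; trivial
    intro u v w
    induction hmem u using Submodule.span_induction with
    | mem x hx =>
      induction hmem v using Submodule.span_induction with
      | mem x' hx' =>
        induction hmem w using Submodule.span_induction with
        | mem x'' hx'' =>
          rcases hx with rfl | rfl | rfl <;> rcases hx' with rfl | rfl | rfl <;>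
            rcases hx'' with rfl | rfl | rfl <;>
          simp only [ha, hb, hy, hab, hay, hyb, hba, hya, hby, smul_mul_assoc,
            mul_smul_comm, smul_smul, smul_zero, mul_zero, zero_mul, smul_add,
            add_zero, zero_add] <;>
          module
        | zero => simp
        | add w₁ w₂ _ _ h1 h2 =>
          simp only [mul_add, add_mul, left_distrib, right_distrib] at h1 h2 ⊢
          linear_combination (norm := abel) h1 + h2
        | smul c w₁ _ h1 =>
          simp only [smul_mul_assoc, mul_smul_comm, ← smul_add] at h1 ⊢
          rw [h1]
      | zero => simp
      | add v₁ v₂ _ _ h1 h2 =>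
        simp only [mul_add, add_mul] at h1 h2 ⊢
        linear_combination (norm := abel) h1 + h2
      | smul c v₁ _ h1 =>
        simp only [smul_mul_assoc, mul_smul_comm, ← smul_add] at h1 ⊢
        rw [h1]
    | zero => simp
    | add u₁ u₂ _ _ h1 h2 =>
      simp only [mul_add, add_mul] at h1 h2 ⊢
      linear_combination (norm := abel) h1 + h2
    | smul c u₁ _ h1 =>
      simp only [smul_mul_assoc, mul_smul_comm, ← smul_add] at h1 ⊢
      rw [h1]
  intro u v
  have h := key u v u
  have h2 : (2 : F) • ((u * v) * u) = (2 : F) • (u * (v * u)) := by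
    rw [two_smul, two_smul]; exact h
  have := smul_right_injective A hchar h2
  exact this
end

section
/- In the 2-dimensional commutative algebra spanned by idempotents a, b with ab = ba = ½(a + b) (char F ≠ 2), the idempotents are exactly 0 and c_μ := μa + (1−μ)b for μ ∈ F, and for each μ the element a − b spans the ½-eigenspace of multiplication by c_μ: c_μ(a−b) = ½(a−b). -/
/-- In the 2-dimensional commutative algebra with idempotents `a, b` and `ab = ½(a+b)`,
the idempotents are exactly `0` and `c_μ = μa + (1−μ)b`, and `c_μ (a−b) = ½(a−b)`. -/
theorem stmt12 {F A : Type*} [Field F] [NonUnitalNonAssocRing A] [Module F A]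
    [SMulCommClass F A A] [IsScalarTower F A A]
    (hchar : (2 : F) ≠ 0)
    (a b : A) (hindep : LinearIndependent F ![a, b])
    (hspan : Submodule.span F {a, b} = ⊤)
    (ha : a * a = a) (hb : b * b = b)
    (hab : a * b = (2 : F)⁻¹ • (a + b)) (hba : b * a = (2 : F)⁻¹ • (a + b)) :
    (∀ u : A, u * u = u ↔ (u = 0 ∨ ∃ μ : F, u = μ • a + (1 - μ) • b)) ∧
    (∀ μ : F, (μ • a + (1 - μ) • b) * (a - b) = (2 : F)⁻¹ • (a - b)) := by
  have hpair := LinearIndependent.pair_iff.mp hindep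
  have key : ∀ x y : F, (x • a + y • b) * (x • a + y • b)
      = (x * x + x * y) • a + (x * y + y * y) • b := by
    intro x y
    rw [add_mul, mul_add, mul_add, smul_mul_assoc, smul_mul_assoc, smul_mul_assoc,
      smul_mul_assoc, mul_smul_comm, mul_smul_comm, mul_smul_comm, mul_smul_comm,
      ha, hb, hab, hba]
    match_scalars <;> field_simp <;> ring
  constructor
  · intro u
    obtain ⟨x, y, hxy⟩ := Submodule.mem_span_pair.mp
      (by rw [hspan]; exact Submodule.mem_top : u ∈ Submodule.span F {a, b})
    constructor
    · intro hid
      rw [← hxy, key] at hid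
      have h0 : (x * x + x * y - x) • a + (x * y + y * y - y) • b = 0 := by
        rw [sub_smul, sub_smul, sub_add_sub_comm, hid, sub_self]
      obtain ⟨h1, h2⟩ := hpair _ _ h0
      by_cases hxy1 : x + y = 1
      · right
        exact ⟨x, by rw [← hxy, show (1 : F) - x = y by linear_combination -hxy1]⟩
      · left
        have hx0 : x = 0 := by
          rcases mul_eq_zero.mp (show x * (x + y - 1) = 0 by linear_combination h1) with h | h
          · exact h
          · exact absurd (by linear_combination h : x + y = 1) hxy1
        have hy0 : y = 0 := by
          rcases mul_eq_zero.mp (show y * (x + y - 1) = 0 by linear_combination h2) with h | h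
          · exact h
          · exact absurd (by linear_combination h : x + y = 1) hxy1
        rw [← hxy, hx0, hy0, zero_smul, zero_smul, add_zero]
    · rintro (rfl | ⟨μ, rfl⟩)
      · simp
      · rw [key]
        congr 1 <;> congr 1 <;> ring
  · intro μ
    rw [add_mul, mul_sub, mul_sub, smul_mul_assoc, smul_mul_assoc, smul_mul_assoc,
      smul_mul_assoc, ha, hb, hab, hba]
    match_scalars <;> field_simp <;> ring
end

section
/- Let A be a 3-dimensional commutative algebra over F (char ≠ 2) with basis {a, b, σ} where a² = a, b² = b, ab = σ + ½(a + b), aσ = bσ = σ² = 0. Then the idempotents of A are exactly 0 and c_μ := μa + (1−μ)b + 2μ(1−μ)σ for μ ∈ F; moreover each c_μ is a primitive axis of type ½, with A_1(c_μ) = F c_μ, A_0(c_μ) = Fσ, and A_{1/2}(c_μ) = F(a − b + 2(1−2μ)σ). -/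
/-- In the 3-dimensional commutative algebra with basis `{a, b, σ}`, `ab = σ + ½a + ½b`,
`aσ = bσ = σ² = 0`: the idempotents are exactly `0` and
`c_μ = μa + (1−μ)b + 2μ(1−μ)σ`; each `c_μ` is a primitive axis of type ½, with
`A₁(c_μ) = F c_μ`, `A₀(c_μ) = Fσ`, and `A_{1/2}(c_μ) = F(a − b + 2(1−2μ)σ)`. -/
theorem stmt14 {F A : Type*} [Field F] [NonUnitalNonAssocRing A] [Module F A]
    [SMulCommClass F A A] [IsScalarTower F A A]
    (hchar : (2 : F) ≠ 0)
    (a b s : A) (hindep : LinearIndependent F ![a, b, s])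
    (hspan : Submodule.span F {a, b, s} = ⊤)
    (ha : a * a = a) (hb : b * b = b)
    (hab : a * b = s + (2 : F)⁻¹ • a + (2 : F)⁻¹ • b)
    (hba : b * a = s + (2 : F)⁻¹ • a + (2 : F)⁻¹ • b)
    (has : a * s = 0) (hsa : s * a = 0) (hbs : b * s = 0) (hsb : s * b = 0)
    (hss : s * s = 0) :
    (∀ u : A, u * u = u ↔
      (u = 0 ∨ ∃ μ : F, u = μ • a + (1 - μ) • b + (2 * μ * (1 - μ)) • s)) ∧
    (∀ μ : F, ∀ c : A, c = μ • a + (1 - μ) • b + (2 * μ * (1 - μ)) • s →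
      {x : A | c * x = x} = (Submodule.span F {c} : Submodule F A) ∧
      {x : A | c * x = 0} = (Submodule.span F {s} : Submodule F A) ∧
      {x : A | c * x = (2 : F)⁻¹ • x} =
        (Submodule.span F {a - b + (2 * (1 - 2 * μ)) • s} : Submodule F A) ∧
      (∀ x y : A, c * x = 0 → c * y = 0 → c * (x * y) = 0) ∧
      (∀ x y : A, c * x = 0 → c * y = (2 : F)⁻¹ • y → c * (x * y) = (2 : F)⁻¹ • (x * y)) ∧
      (∀ x y : A, c * x = (2 : F)⁻¹ • x → c * y = (2 : F)⁻¹ • y →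
        x * y ∈ Submodule.span F {c} ⊔ Submodule.span F {s})) := by
  have h21 : (2:F)⁻¹ * 2 = 1 := inv_mul_cancel₀ hchar
  have hcoord : ∀ x : A, ∃ α β γ : F, x = α • a + β • b + γ • s := by
    intro x
    have hx : x ∈ Submodule.span F ({a, b, s} : Set A) := by rw [hspan]; trivial
    rw [Submodule.mem_span_insert] at hx
    obtain ⟨p, z, hz, hx⟩ := hx
    rw [Submodule.mem_span_pair] at hz
    obtain ⟨q, r, hz⟩ := hz
    exact ⟨p, q, r, by rw [hx, ← hz, add_assoc]⟩
  have huniq : ∀ α β γ : F, α • a + β • b + γ • s = 0 → α = 0 ∧ β = 0 ∧ γ = 0 := by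
    intro α β γ h
    have h' := Fintype.linearIndependent_iff.mp hindep ![α, β, γ]
      (by simpa [Fin.sum_univ_three] using h)
    exact ⟨h' 0, h' 1, h' 2⟩
  have hcoe : ∀ α β γ α' β' γ' : F, α • a + β • b + γ • s = α' • a + β' • b + γ' • s →
      α = α' ∧ β = β' ∧ γ = γ' := by
    intro α β γ α' β' γ' h
    have h0 : (α - α') • a + (β - β') • b + (γ - γ') • s = 0 := by
      have h1 : (α - α') • a + (β - β') • b + (γ - γ') • s
          = (α • a + β • b + γ • s) - (α' • a + β' • b + γ' • s) := by module
      rw [h1, h, sub_self]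
    obtain ⟨h1, h2, h3⟩ := huniq _ _ _ h0
    exact ⟨sub_eq_zero.mp h1, sub_eq_zero.mp h2, sub_eq_zero.mp h3⟩
  have hmul : ∀ α β γ α' β' γ' : F,
      (α • a + β • b + γ • s) * (α' • a + β' • b + γ' • s)
        = (α*α' + (2:F)⁻¹*(α*β'+β*α')) • a + (β*β' + (2:F)⁻¹*(α*β'+β*α')) • b
          + (α*β'+β*α') • s := by
    intro α β γ α' β' γ'
    simp only [add_mul, mul_add, smul_mul_assoc, mul_smul_comm, ha, hb, hab, hba,
      has, hsa, hbs, hsb, hss, smul_add, smul_smul, smul_zero]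
    match_scalars <;> field_simp <;> ring
  constructor
  · intro u
    constructor
    · intro hu
      obtain ⟨α, β, γ, hx⟩ := hcoord u
      rw [hx, hmul] at hu
      obtain ⟨e1, e2, e3⟩ := hcoe _ _ _ _ _ _ hu
      have e1' : α * (α + β - 1) = 0 := by linear_combination e1 - (α*β)*h21
      have e2' : β * (α + β - 1) = 0 := by linear_combination e2 - (α*β)*h21
      rcases mul_eq_zero.mp e1' with hα | hs1
      · rcases mul_eq_zero.mp e2' with hβ | hs2
        · left
          have hγ : γ = 0 := by linear_combination -e3 + β*hα + α*hβ
          rw [hx, hα, hβ, hγ]; simp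
        · right
          refine ⟨α, ?_⟩
          have hβ : β = 1 - α := by linear_combination hs2
          have hγ : γ = 2*α*(1-α) := by linear_combination 2*α*hβ - e3
          rw [hx, hβ, hγ]
      · right
        refine ⟨α, ?_⟩
        have hβ : β = 1 - α := by linear_combination hs1
        have hγ : γ = 2*α*(1-α) := by linear_combination 2*α*hβ - e3
        rw [hx, hβ, hγ]
    · rintro (rfl | ⟨μ, rfl⟩)
      · simp
      · rw [hmul]; match_scalars <;> field_simp <;> ring
  · intro μ c hc
    have hE1 : {x : A | c * x = x} = (Submodule.span F {c} : Submodule F A) := by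
      ext x
      simp only [Set.mem_setOf_eq, SetLike.mem_coe, Submodule.mem_span_singleton]
      constructor
      · intro hx
        obtain ⟨α, β, γ, hxc⟩ := hcoord x
        rw [hxc, hc, hmul] at hx
        obtain ⟨e1, e2, e3⟩ := hcoe _ _ _ _ _ _ hx
        have k1 : μ*β = (1-μ)*α := by
          linear_combination 2*e1 - (μ*β+(1-μ)*α)*h21
        refine ⟨α + β, ?_⟩
        rw [hc, hxc]
        match_scalars
        · linear_combination k1
        · linear_combination -k1
        · linear_combination (1-2*μ)*k1 + e3
      · rintro ⟨l, rfl⟩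
        rw [hc]
        have hrep : l • ((μ:F) • a + (1 - μ) • b + (2 * μ * (1 - μ)) • s)
            = (l*μ) • a + (l*(1-μ)) • b + (l*(2*μ*(1-μ))) • s := by module
        rw [hrep, hmul]
        match_scalars <;> field_simp <;> ring
    have hE0 : {x : A | c * x = 0} = (Submodule.span F {s} : Submodule F A) := by
      ext x
      simp only [Set.mem_setOf_eq, SetLike.mem_coe, Submodule.mem_span_singleton]
      constructor
      · intro hx
        obtain ⟨α, β, γ, hxc⟩ := hcoord x
        have h0 : (0:F) • a + (0:F) • b + (0:F) • s = (0:A) := by module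
        rw [hxc, hc, hmul, ← h0] at hx
        obtain ⟨e1, e2, e3⟩ := hcoe _ _ _ _ _ _ hx
        have k1 : μ*α = 0 := by linear_combination e1 - (2:F)⁻¹*e3
        have k2 : (1-μ)*β = 0 := by linear_combination e2 - (2:F)⁻¹*e3
        have hα : α = 0 := by linear_combination (1-μ)*e3 - μ*k2 + (2-μ)*k1
        have hβ : β = 0 := by linear_combination e3 - (1-μ)*hα + k2
        exact ⟨γ, by rw [hxc, hα, hβ]; module⟩
      · rintro ⟨l, rfl⟩
        rw [hc]
        simp [mul_smul_comm, mul_add, add_mul, smul_mul_assoc, has, hbs, hss]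
    have hEh : {x : A | c * x = (2:F)⁻¹ • x}
        = (Submodule.span F {a - b + (2 * (1 - 2 * μ)) • s} : Submodule F A) := by
      ext x
      simp only [Set.mem_setOf_eq, SetLike.mem_coe, Submodule.mem_span_singleton]
      constructor
      · intro hx
        obtain ⟨α, β, γ, hxc⟩ := hcoord x
        rw [hxc, hc, hmul, smul_add, smul_add, smul_smul, smul_smul, smul_smul] at hx
        obtain ⟨e1, e2, e3⟩ := hcoe _ _ _ _ _ _ hx
        have k1 : μ*(α+β) = 0 := by
          linear_combination 2*e1 + (α - μ*β - (1-μ)*α)*h21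
        have k2 : (1-μ)*(α+β) = 0 := by
          linear_combination 2*e2 + (β - μ*β - (1-μ)*α)*h21
        have hβ : β = -α := by linear_combination k1 + k2
        have hγ : γ = 2*α*(1-2*μ) := by
          linear_combination -2*e3 - γ*h21 + 2*μ*hβ
        exact ⟨α, by rw [hxc, hβ, hγ]; module⟩
      · rintro ⟨l, rfl⟩
        rw [hc]
        have hrep : l • (a - b + (2 * (1 - 2*μ)) • s)
            = l • a + (-l) • b + (l*(2*(1-2*μ))) • s := by module
        rw [hrep, hmul]
        match_scalars <;> field_simp <;> ring
    have hker : ∀ x : A, c * x = 0 → ∃ g : F, g • s = x := by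
      intro x hx
      have hx' : x ∈ ({x : A | c * x = 0}) := hx
      rw [hE0] at hx'
      exact Submodule.mem_span_singleton.mp hx'
    have hhalf : ∀ x : A, c * x = (2:F)⁻¹ • x →
        ∃ g : F, g • (a - b + (2 * (1 - 2 * μ)) • s) = x := by
      intro x hx
      have hx' : x ∈ ({x : A | c * x = (2:F)⁻¹ • x}) := hx
      rw [hEh] at hx'
      exact Submodule.mem_span_singleton.mp hx'
    refine ⟨hE1, hE0, hEh, ?_, ?_, ?_⟩
    · intro x y hx hy
      obtain ⟨g, rfl⟩ := hker x hx
      obtain ⟨g', rfl⟩ := hker y hy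
      simp [smul_mul_assoc, mul_smul_comm, hss]
    · intro x y hx hy
      obtain ⟨g, rfl⟩ := hker x hx
      obtain ⟨g', rfl⟩ := hhalf y hy
      have hsv : s * (a - b + (2 * (1 - 2 * μ)) • s) = 0 := by
        simp [mul_sub, mul_add, mul_smul_comm, hsa, hsb, hss]
      have hxy : (g • s) * (g' • (a - b + (2 * (1 - 2 * μ)) • s)) = 0 := by
        rw [smul_mul_assoc, mul_smul_comm, hsv, smul_zero, smul_zero]
      rw [hxy, mul_zero, smul_zero]
    · intro x y hx hy
      obtain ⟨g, rfl⟩ := hhalf x hx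
      obtain ⟨g', rfl⟩ := hhalf y hy
      have hvv : (a - b + (2 * (1 - 2 * μ)) • s) * (a - b + (2 * (1 - 2 * μ)) • s)
          = (-2:F) • s := by
        have hv : a - b + (2 * (1 - 2 * μ)) • s
            = (1:F) • a + (-1:F) • b + (2*(1-2*μ)) • s := by module
        rw [hv, hmul]
        match_scalars <;> field_simp <;> ring
      rw [smul_mul_assoc, mul_smul_comm, hvv]
      exact Submodule.mem_sup_right (Submodule.smul_mem _ _ (Submodule.smul_mem _ _
        (Submodule.smul_mem _ _ (Submodule.mem_span_singleton_self s))))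
end

section
/- Let A be the 3-dimensional commutative algebra over F (char ≠ 2) with basis {a, b, σ} where a² = a, b² = b, ab = σ + ½(a+b), aσ = bσ = σ² = 0. Let c = ½a + ½b + ½σ. Then c is an idempotent, a − b spans the ½-eigenspace of c, and the Miyamoto involution τ_c (negating the ½-eigenspace of c, fixing Fc ⊕ Fσ) maps a to b. -/
/-!
In the basis `c, a - b, σ` the multiplication by `c` is diagonal with eigenvalues `1, ½, 0`:
`c² = c`, `c (a - b) = ½ (a - b)` because `ab = ba` and `σa = σb = 0`, and `cσ = 0`.
Since the three eigenvalues are distinct, the `½`-eigenspace is the line through `a - b`.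
Writing `a = c + ½ (a - b) - ½ σ` and `b = c - ½ (a - b) - ½ σ` shows that `τ_c` swaps `a`
and `b`.
-/

open Submodule

theorem Matrix.range_vecCons_three {α : Type*} (x y z : α) :
    Set.range ![x, y, z] = {x, y, z} := by
  rw [Matrix.range_cons, Matrix.range_cons_cons_empty, Set.singleton_union]

section LinearAlgebra

variable {K V : Type*} [Field K] [AddCommGroup V] [Module K V]

theorem LinearIndependent.eq_zero_of_fin_three {u v w : V} (h : LinearIndependent K ![u, v, w])
    {α β γ : K} (hz : α • u + β • v + γ • w = 0) : α = 0 ∧ β = 0 ∧ γ = 0 := by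
  have := Fintype.linearIndependent_iff.mp h ![α, β, γ] (by simpa [Fin.sum_univ_three] using hz)
  exact ⟨this 0, this 1, this 2⟩

theorem LinearIndependent.of_span_range_eq_top {ι ι' : Type*} [Fintype ι] [Fintype ι']
    {v : ι → V} {w : ι' → V} (hv : LinearIndependent K v) (hv_span : span K (Set.range v) = ⊤)
    (hw_span : span K (Set.range w) = ⊤) (hcard : Fintype.card ι' = Fintype.card ι) :
    LinearIndependent K w :=
  linearIndependent_of_top_le_span_of_card_eq_finrank hw_span.ge <| by
    rw [hcard, ← finrank_span_eq_card hv, hv_span, finrank_top]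

theorem setOf_apply_eq_smul_eq_span_singleton (L : V →ₗ[K] V) {e₁ e₂ e₃ : V} {μ₁ μ₂ μ₃ : K}
    (hind : LinearIndependent K ![e₁, e₂, e₃]) (hspan : span K {e₁, e₂, e₃} = ⊤)
    (h₁ : L e₁ = μ₁ • e₁) (h₂ : L e₂ = μ₂ • e₂) (h₃ : L e₃ = μ₃ • e₃)
    (h₁₂ : μ₁ ≠ μ₂) (h₃₂ : μ₃ ≠ μ₂) :
    {x | L x = μ₂ • x} = (span K {e₂} : Set V) := by
  ext x
  constructor
  · intro hx
    obtain ⟨α, β, γ, rfl⟩ := mem_span_triple.mp (hspan ▸ mem_top : x ∈ span K {e₁, e₂, e₃})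
    have hz : (α * (μ₁ - μ₂)) • e₁ + (0 : K) • e₂ + (γ * (μ₃ - μ₂)) • e₃ = 0 := by
      simp only [Set.mem_ofPred_eq, map_add, map_smul, h₁, h₂, h₃] at hx
      linear_combination (norm := module) hx
    obtain ⟨hα, -, hγ⟩ := hind.eq_zero_of_fin_three hz
    rw [(mul_eq_zero.mp hα).resolve_right (sub_ne_zero.mpr h₁₂),
      (mul_eq_zero.mp hγ).resolve_right (sub_ne_zero.mpr h₃₂)]
    simpa using smul_mem _ β (mem_span_singleton_self e₂)
  · intro hx
    obtain ⟨β, rfl⟩ := mem_span_singleton.mp hx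
    simp [h₂, smul_comm β μ₂]

theorem span_half_sum_sub_eq (hchar : (2 : K) ≠ 0) (a b s : V) :
    span K {(2 : K)⁻¹ • a + (2 : K)⁻¹ • b + (2 : K)⁻¹ • s, a - b, s} = span K {a, b, s} := by
  have hk : (2 : K)⁻¹ * 2 = 1 := inv_mul_cancel₀ hchar
  apply le_antisymm <;>
    simp only [span_le, Set.insert_subset_iff, Set.singleton_subset_iff, SetLike.mem_coe,
      mem_span_triple] <;> refine ⟨?_, ?_, ?_⟩
  · exact ⟨_, _, _, rfl⟩
  · exact ⟨1, -1, 0, by module⟩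
  · exact ⟨0, 0, 1, by module⟩
  · exact ⟨1, (2 : K)⁻¹, -(2 : K)⁻¹, by linear_combination (norm := module) hk • a⟩
  · exact ⟨1, -(2 : K)⁻¹, -(2 : K)⁻¹, by linear_combination (norm := module) hk • b⟩
  · exact ⟨0, 0, 1, by module⟩

theorem LinearMap.apply_eq_of_apply_sub_eq_neg (hchar : (2 : K) ≠ 0) (τ : V →ₗ[K] V) {a b s : V}
    (hc : τ ((2 : K)⁻¹ • a + (2 : K)⁻¹ • b + (2 : K)⁻¹ • s) =
      (2 : K)⁻¹ • a + (2 : K)⁻¹ • b + (2 : K)⁻¹ • s)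
    (hs : τ s = s) (hab : τ (a - b) = -(a - b)) : τ a = b := by
  have hk : (2 : K)⁻¹ * 2 = 1 := inv_mul_cancel₀ hchar
  have ha : a = ((2 : K)⁻¹ • a + (2 : K)⁻¹ • b + (2 : K)⁻¹ • s) + (2 : K)⁻¹ • (a - b)
      - (2 : K)⁻¹ • s := by
    linear_combination (norm := module) -hk • a
  rw [ha, map_sub, map_add, map_smul, map_smul, hc, hs, hab]
  linear_combination (norm := module) hk • b

end LinearAlgebra

section Algebra

variable {F A : Type*} [Field F] [NonUnitalNonAssocRing A] [Module F A] [IsScalarTower F A A]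

theorem half_sum_mul_self [SMulCommClass F A A] (hchar : (2 : F) ≠ 0) {a b s : A}
    (ha : a * a = a) (hb : b * b = b)
    (hab : a * b = s + (2 : F)⁻¹ • a + (2 : F)⁻¹ • b)
    (hba : b * a = s + (2 : F)⁻¹ • a + (2 : F)⁻¹ • b)
    (has : a * s = 0) (hsa : s * a = 0) (hbs : b * s = 0) (hsb : s * b = 0) (hss : s * s = 0) :
    ((2 : F)⁻¹ • a + (2 : F)⁻¹ • b + (2 : F)⁻¹ • s) *
      ((2 : F)⁻¹ • a + (2 : F)⁻¹ • b + (2 : F)⁻¹ • s) =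
      (2 : F)⁻¹ • a + (2 : F)⁻¹ • b + (2 : F)⁻¹ • s := by
  have hk : (2 : F)⁻¹ * 2 = 1 := inv_mul_cancel₀ hchar
  simp only [add_mul, mul_add, smul_mul_assoc, mul_smul_comm, ha, hb, hab, hba, has, hsa, hbs,
    hsb, hss, smul_zero, add_zero]
  linear_combination (norm := module)
    ((2 : F)⁻¹ * ((2 : F)⁻¹ + 1) * hk) • (a + b) + ((2 : F)⁻¹ * hk) • s

theorem half_sum_mul_sub {a b s : A} (ha : a * a = a) (hb : b * b = b) (hab : a * b = b * a)
    (hsa : s * a = 0) (hsb : s * b = 0) :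
    ((2 : F)⁻¹ • a + (2 : F)⁻¹ • b + (2 : F)⁻¹ • s) * (a - b) = (2 : F)⁻¹ • (a - b) := by
  simp only [add_mul, mul_sub, smul_mul_assoc, ha, hb, hab, hsa, hsb]
  module

theorem half_sum_mul_eq_zero {a b s : A} (has : a * s = 0) (hbs : b * s = 0) (hss : s * s = 0) :
    ((2 : F)⁻¹ • a + (2 : F)⁻¹ • b + (2 : F)⁻¹ • s) * s = 0 := by
  simp only [add_mul, smul_mul_assoc, has, hbs, hss, smul_zero, add_zero]

end Algebra

/-- With `{a,b,σ}` as before and `c = ½a + ½b + ½σ`: `c` is idempotent, `a − b` spans the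
½-eigenspace of `c`, and the Miyamoto involution `τ_c` maps `a` to `b`. -/
theorem stmt15 {F A : Type*} [Field F] [NonUnitalNonAssocRing A] [Module F A]
    [SMulCommClass F A A] [IsScalarTower F A A]
    (hchar : (2 : F) ≠ 0)
    (a b s : A) (hindep : LinearIndependent F ![a, b, s])
    (hspan : Submodule.span F {a, b, s} = ⊤)
    (ha : a * a = a) (hb : b * b = b)
    (hab : a * b = s + (2 : F)⁻¹ • a + (2 : F)⁻¹ • b)
    (hba : b * a = s + (2 : F)⁻¹ • a + (2 : F)⁻¹ • b)
    (has : a * s = 0) (hsa : s * a = 0) (hbs : b * s = 0) (hsb : s * b = 0)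
    (hss : s * s = 0)
    (c : A) (hc : c = (2 : F)⁻¹ • a + (2 : F)⁻¹ • b + (2 : F)⁻¹ • s) :
    c * c = c ∧
    {x : A | c * x = (2 : F)⁻¹ • x} = (Submodule.span F {a - b} : Submodule F A) ∧
    (∀ τ : A →ₗ[F] A,
      (∀ x : A, c * x = x → τ x = x) →
      (∀ x : A, c * x = 0 → τ x = x) →
      (∀ x : A, c * x = (2 : F)⁻¹ • x → τ x = -x) →
      τ a = b) := by
  subst hc
  have hcc := half_sum_mul_self hchar ha hb hab hba has hsa hbs hsb hss
  have hcab := half_sum_mul_sub (F := F) ha hb (hab.trans hba.symm) hsa hsb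
  have hcs := half_sum_mul_eq_zero (F := F) has hbs hss
  have hspan' := (span_half_sum_sub_eq hchar a b s).trans hspan
  have hindep' : LinearIndependent F ![_, a - b, s] := hindep.of_span_range_eq_top
    (by rwa [Matrix.range_vecCons_three]) (by rwa [Matrix.range_vecCons_three]) rfl
  refine ⟨hcc, ?_, fun τ hτ₁ hτ₀ hτhalf ↦ ?_⟩
  · refine setOf_apply_eq_smul_eq_span_singleton (LinearMap.mulLeft F _) hindep' hspan'
      (μ₁ := 1) (μ₃ := 0) (by simpa using hcc) hcab (by simpa using hcs) ?_
      (inv_ne_zero hchar).symm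
    exact fun h ↦ one_ne_zero (by linear_combination 2 * h + inv_mul_cancel₀ hchar : (1 : F) = 0)
  · exact τ.apply_eq_of_apply_sub_eq_neg hchar (hτ₁ _ hcc) (hτ₀ _ hcs) (hτhalf _ hcab)
end

section
/- In the algebra U_2(½) over F (char ≠ 2), commutative with ab = ½(a+b), writing x = a − b, the composition of Miyamoto involutions satisfies a^{(τ_b τ_a)^k} = a + 2kx for all natural numbers k, where τ_c is the automorphism fixing c and negating the ½-eigenspace of c. -/
/-- In `U_2(½)` with `x = a − b`, the Miyamoto involutions satisfy
`a^{(τ_b τ_a)^k} = a + 2k x` for all `k ∈ ℕ`. -/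
theorem stmt19 {F A : Type*} [Field F] [NonUnitalNonAssocRing A] [Module F A]
    [SMulCommClass F A A] [IsScalarTower F A A]
    (hchar : (2 : F) ≠ 0)
    (a b : A) (hindep : LinearIndependent F ![a, b])
    (hspan : Submodule.span F {a, b} = ⊤)
    (ha : a * a = a) (hb : b * b = b)
    (hab : a * b = (2 : F)⁻¹ • a + (2 : F)⁻¹ • b)
    (hba : b * a = (2 : F)⁻¹ • a + (2 : F)⁻¹ • b)
    (tau_a tau_b : A →ₗ[F] A)
    (hta1 : tau_a a = a) (htah : ∀ x : A, a * x = (2 : F)⁻¹ • x → tau_a x = -x)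
    (htb1 : tau_b b = b) (htbh : ∀ x : A, b * x = (2 : F)⁻¹ • x → tau_b x = -x) :
    ∀ k : ℕ, (fun z => tau_a (tau_b z))^[k] a = a + ((2 * k : ℕ) : F) • (a - b) := by
  have h2 : (2 : F)⁻¹ + (2 : F)⁻¹ = 1 := by
    field_simp
    norm_num
  have hcomb : ∀ c : A, (2 : F)⁻¹ • c + (2 : F)⁻¹ • c = c := by
    intro c
    rw [← add_smul, h2, one_smul]
  have hax : a * (a - b) = (2 : F)⁻¹ • (a - b) := by
    rw [mul_sub, ha, hab]
    match_scalars <;> (field_simp; all_goals ring)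
  have hbx : b * (a - b) = (2 : F)⁻¹ • (a - b) := by
    rw [mul_sub, hb, hba]
    match_scalars <;> (field_simp; all_goals ring)
  have htax : tau_a (a - b) = -(a - b) := htah _ hax
  have htbx : tau_b (a - b) = -(a - b) := htbh _ hbx
  have htba : tau_b a = b - (a - b) := by
    have : a = b + (a - b) := by abel
    rw [show tau_b a = tau_b (b + (a - b)) by rw [← this], map_add, htb1, htbx]
    abel
  have htab : tau_a b = a + (a - b) := by
    have : b = a - (a - b) := by abel
    rw [show tau_a b = tau_a (a - (a - b)) by rw [← this], map_sub, hta1, htax]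
    abel
  have key : ∀ c : F, tau_a (tau_b (a + c • (a - b))) = a + (c + 2) • (a - b) := by
    intro c
    simp only [map_add, map_sub, map_smul, map_neg, htab, hta1, htax, htbx, htba]
    module
  intro k
  induction k with
  | zero => simp
  | succ n ih =>
    rw [Function.iterate_succ_apply', ih, key]
    congr 1
    push_cast
    ring_nf
end
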